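/- arXiv:2003.13241 — 4 statements merged into one kernel-verified Lean document; each statement's English description precedes it below -/
import Mathlib

section
/- For every sequence (y_n) of measurable functions y_n : Ω → ℝ one has ‖y_n‖_H → +∞ as n → ∞ if and only if ρ_H(y_n) → +∞ as n → ∞. -/
open MeasureTheory ENNReal Filter

/-- The modular `ρ_H(y) = ∫_Ω (|y|^p + μ(x)|y|^q) dν`, with values in `[0,∞]`. -/
noncomputable def rhoH {Ω : Type*} [MeasurableSpace Ω] (ν : MeasureTheory.Measure Ω)
    (μ : Ω → ℝ) (p q : ℝ) (y : Ω → ℝ) : ℝ≥0∞ :=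
  ∫⁻ x, ENNReal.ofReal (|y x| ^ p + μ x * |y x| ^ q) ∂ν

/-- The Luxemburg norm `‖y‖_H = inf { τ > 0 : ρ_H(y/τ) ≤ 1 }`, with `inf ∅ = +∞`. -/
noncomputable def normH {Ω : Type*} [MeasurableSpace Ω] (ν : MeasureTheory.Measure Ω)
    (μ : Ω → ℝ) (p q : ℝ) (y : Ω → ℝ) : ℝ≥0∞ :=
  sInf (ENNReal.ofReal '' {τ : ℝ | 0 < τ ∧ rhoH ν μ p q (fun x => y x / τ) ≤ 1})

-- Lemma B: ρ(y) ≤ max(τ^p,τ^q) · ρ(y/τ)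
lemma rhoH_le_mul {Ω : Type*} [MeasurableSpace Ω] (ν : MeasureTheory.Measure Ω)
    (μ : Ω → ℝ) (p q : ℝ) (hp : 0 < p) (hq : 0 < q) (hμ : ∀ᵐ x ∂ν, 0 ≤ μ x)
    (y : Ω → ℝ) {τ : ℝ} (hτ : 0 < τ) :
    rhoH ν μ p q y ≤ ENNReal.ofReal (max (τ ^ p) (τ ^ q)) *
      rhoH ν μ p q (fun x => y x / τ) := by
  have hTP : (0:ℝ) < τ ^ p := Real.rpow_pos_of_pos hτ p
  have hTQ : (0:ℝ) < τ ^ q := Real.rpow_pos_of_pos hτ q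
  rw [rhoH, rhoH, ← lintegral_const_mul' _ _ ENNReal.ofReal_ne_top]
  refine lintegral_mono_ae ?_
  filter_upwards [hμ] with x hx
  rw [← ENNReal.ofReal_mul (le_max_of_le_left hTP.le)]
  apply ENNReal.ofReal_le_ofReal
  have habs : |y x / τ| = |y x| / τ := by
    rw [abs_div, abs_of_pos hτ]
  rw [habs, Real.div_rpow (abs_nonneg _) hτ.le, Real.div_rpow (abs_nonneg _) hτ.le]
  set A := |y x| ^ p with hA
  set B := |y x| ^ q with hB
  have hA0 : 0 ≤ A := Real.rpow_nonneg (abs_nonneg _) p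
  have hB0 : 0 ≤ B := Real.rpow_nonneg (abs_nonneg _) q
  have h1 : A = τ ^ p * (A / τ ^ p) := by field_simp
  have h2 : μ x * B = τ ^ q * (μ x * (B / τ ^ q)) := by field_simp
  calc A + μ x * B = τ ^ p * (A / τ ^ p) + τ ^ q * (μ x * (B / τ ^ q)) := by
        rw [← h1, ← h2]
    _ ≤ max (τ ^ p) (τ ^ q) * (A / τ ^ p) + max (τ ^ p) (τ ^ q) * (μ x * (B / τ ^ q)) :=
        add_le_add
          (mul_le_mul_of_nonneg_right (le_max_left _ _) (by positivity))
          (mul_le_mul_of_nonneg_right (le_max_right _ _) (mul_nonneg hx (by positivity)))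
    _ = max (τ ^ p) (τ ^ q) * (A / τ ^ p + μ x * (B / τ ^ q)) := by ring

-- Lemma A: for τ ≥ 1, τ^p · ρ(y/τ) ≤ ρ(y)
lemma mul_rhoH_div_le {Ω : Type*} [MeasurableSpace Ω] (ν : MeasureTheory.Measure Ω)
    (μ : Ω → ℝ) (p q : ℝ) (hp : 0 < p) (hpq : p ≤ q) (hμ : ∀ᵐ x ∂ν, 0 ≤ μ x)
    (y : Ω → ℝ) {τ : ℝ} (hτ : 1 ≤ τ) :
    ENNReal.ofReal (τ ^ p) * rhoH ν μ p q (fun x => y x / τ) ≤ rhoH ν μ p q y := by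
  have hτ0 : (0:ℝ) < τ := lt_of_lt_of_le one_pos hτ
  have hpq' : τ ^ p ≤ τ ^ q := Real.rpow_le_rpow_of_exponent_le hτ hpq
  rw [rhoH, rhoH, ← lintegral_const_mul' _ _ ENNReal.ofReal_ne_top]
  refine lintegral_mono_ae ?_
  filter_upwards [hμ] with x hx
  rw [← ENNReal.ofReal_mul (Real.rpow_nonneg hτ0.le p)]
  apply ENNReal.ofReal_le_ofReal
  have habs : |y x / τ| = |y x| / τ := by rw [abs_div, abs_of_pos hτ0]
  rw [habs, Real.div_rpow (abs_nonneg _) hτ0.le, Real.div_rpow (abs_nonneg _) hτ0.le]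
  set A := |y x| ^ p
  set B := |y x| ^ q
  have hA0 : 0 ≤ A := Real.rpow_nonneg (abs_nonneg _) p
  have hB0 : 0 ≤ B := Real.rpow_nonneg (abs_nonneg _) q
  have hTP : (0:ℝ) < τ ^ p := Real.rpow_pos_of_pos hτ0 p
  have hTQ : (0:ℝ) < τ ^ q := Real.rpow_pos_of_pos hτ0 q
  have h1 : τ ^ p * (A / τ ^ p) = A := by field_simp
  have h2 : τ ^ p * (μ x * (B / τ ^ q)) ≤ μ x * B := by
    rw [mul_comm (τ ^ p)]
    calc μ x * (B / τ ^ q) * τ ^ p ≤ μ x * (B / τ ^ q) * τ ^ q :=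
          mul_le_mul_of_nonneg_left hpq' (mul_nonneg hx (by positivity))
      _ = μ x * B := by field_simp
  calc τ ^ p * (A / τ ^ p + μ x * (B / τ ^ q))
      = τ ^ p * (A / τ ^ p) + τ ^ p * (μ x * (B / τ ^ q)) := by ring
    _ ≤ A + μ x * B := by rw [h1]; gcongr

/-- `‖y_n‖_H → +∞` iff `ρ_H(y_n) → +∞`. -/
theorem normH_tendsto_top_iff_modular_tendsto_top {Ω : Type*} [MeasurableSpace Ω]
    (ν : MeasureTheory.Measure Ω) (p q : ℝ) (hp : 1 < p) (hpq : p < q)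
    (μ : Ω → ℝ) (hμm : Measurable μ) (hμ : ∀ᵐ x ∂ν, 0 ≤ μ x)
    (y : ℕ → Ω → ℝ) (hy : ∀ n, Measurable (y n)) :
    Tendsto (fun n => normH ν μ p q (y n)) atTop (nhds ⊤) ↔
      Tendsto (fun n => rhoH ν μ p q (y n)) atTop (nhds ⊤) := by
  have hp0 : (0:ℝ) < p := lt_trans one_pos hp
  have hq0 : (0:ℝ) < q := lt_trans hp0 hpq
  constructor
  · -- norm → ∞ ⇒ ρ → ∞
    intro h
    rw [ENNReal.tendsto_nhds_top_iff_nat] at *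
    intro n
    set T : ℝ := max 1 (((n:ℝ) + 1) ^ p⁻¹) with hT
    have hT1 : (1:ℝ) ≤ T := le_max_left _ _
    have hT0 : (0:ℝ) < T := lt_of_lt_of_le one_pos hT1
    have hnT : ((n:ℝ) + 1) ≤ T ^ p := by
      have : (((n:ℝ) + 1) ^ p⁻¹) ^ p ≤ T ^ p := by
        apply Real.rpow_le_rpow (Real.rpow_nonneg (by positivity) _) (le_max_right _ _) hp0.le
      rwa [Real.rpow_inv_rpow (by positivity) hp0.ne'] at this
    filter_upwards [h ⌈T⌉₊] with k hk
    by_contra hcon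
    push_neg at hcon
    -- ρ(y k) ≤ n ≤ ofReal (T^p)
    have hrle : rhoH ν μ p q (y k) ≤ ENNReal.ofReal (T ^ p) := by
      refine le_trans hcon ?_
      calc (n : ℝ≥0∞) = ENNReal.ofReal (n : ℝ) := (ENNReal.ofReal_natCast n).symm
        _ ≤ ENNReal.ofReal (T ^ p) := ENNReal.ofReal_le_ofReal (le_trans (by linarith) hnT)
    -- then normH ≤ ofReal T
    have hmem : ENNReal.ofReal T ∈
        ENNReal.ofReal '' {τ : ℝ | 0 < τ ∧ rhoH ν μ p q (fun x => y k x / τ) ≤ 1} := by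
      refine ⟨T, ⟨hT0, ?_⟩, rfl⟩
      have key := mul_rhoH_div_le ν μ p q hp0 hpq.le hμ (y k) hT1
      have hne : ENNReal.ofReal (T ^ p) ≠ 0 := by
        simp [ENNReal.ofReal_eq_zero, not_le, Real.rpow_pos_of_pos hT0 p]
      rw [← ENNReal.mul_le_mul_iff_right hne ENNReal.ofReal_ne_top, mul_one]
      exact le_trans key hrle
    have hle : normH ν μ p q (y k) ≤ ENNReal.ofReal T := sInf_le hmem
    have : (⌈T⌉₊ : ℝ≥0∞) < ENNReal.ofReal T := lt_of_lt_of_le hk hle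
    have h2 : ENNReal.ofReal T ≤ (⌈T⌉₊ : ℝ≥0∞) := by
      rw [← ENNReal.ofReal_natCast]
      exact ENNReal.ofReal_le_ofReal (Nat.le_ceil T)
    exact absurd h2 this.not_ge
  · -- ρ → ∞ ⇒ norm → ∞
    intro h
    rw [ENNReal.tendsto_nhds_top_iff_nat] at *
    intro n
    set C : ℝ := (n : ℝ) + 1 with hC
    have hC1 : (1:ℝ) ≤ C := by simp [hC]
    have hC0 : (0:ℝ) < C := lt_of_lt_of_le one_pos hC1
    filter_upwards [h ⌈C ^ q⌉₊] with k hk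
    -- normH ≥ ofReal C > n
    have hlow : ENNReal.ofReal C ≤ normH ν μ p q (y k) := by
      apply le_sInf
      rintro b ⟨τ, ⟨hτ0, hτρ⟩, rfl⟩
      apply ENNReal.ofReal_le_ofReal
      by_contra hcon
      push_neg at hcon
      -- τ < C, so ρ(y k) ≤ ofReal (C^q)
      have hmax : max (τ ^ p) (τ ^ q) ≤ C ^ q := by
        have h1 : τ ^ p ≤ C ^ p := Real.rpow_le_rpow hτ0.le hcon.le hp0.le
        have h2 : τ ^ q ≤ C ^ q := Real.rpow_le_rpow hτ0.le hcon.le hq0.le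
        have h3 : C ^ p ≤ C ^ q := Real.rpow_le_rpow_of_exponent_le hC1 hpq.le
        exact max_le (le_trans h1 h3) h2
      have key := rhoH_le_mul ν μ p q hp0 hq0 hμ (y k) hτ0
      have : rhoH ν μ p q (y k) ≤ ENNReal.ofReal (C ^ q) := by
        calc rhoH ν μ p q (y k) ≤ ENNReal.ofReal (max (τ ^ p) (τ ^ q)) *
              rhoH ν μ p q (fun x => y k x / τ) := key
          _ ≤ ENNReal.ofReal (C ^ q) * 1 := by
              exact mul_le_mul' (ENNReal.ofReal_le_ofReal hmax) hτρ
          _ = ENNReal.ofReal (C ^ q) := mul_one _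
      have hceil : ENNReal.ofReal (C ^ q) ≤ (⌈C ^ q⌉₊ : ℝ≥0∞) := by
        rw [← ENNReal.ofReal_natCast]
        exact ENNReal.ofReal_le_ofReal (Nat.le_ceil _)
      exact absurd (le_trans this hceil) hk.not_ge
    calc (n : ℝ≥0∞) < ENNReal.ofReal C := by
          rw [hC, ENNReal.ofReal_add (by positivity) zero_le_one, ENNReal.ofReal_natCast,
            ENNReal.ofReal_one]
          exact ENNReal.lt_add_right (by simp) one_ne_zero
      _ ≤ _ := hlow
end

section
/- For every measurable u : Ω → ℝ one has (∫_Ω μ(x)|u(x)|^q dν(x))^{1/q} ≤ ‖u‖_H (as an inequality in [0, ∞]). -/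
open MeasureTheory ENNReal Filter

/-- `(∫_Ω μ|u|^q dν)^{1/q} ≤ ‖u‖_H`, i.e. the embedding `L^H(Ω) → L^q_μ(Ω)` is continuous. -/
theorem embedding_LH_into_Lq_mu {Ω : Type*} [MeasurableSpace Ω]
    (ν : MeasureTheory.Measure Ω) (p q : ℝ) (hp : 1 < p) (hpq : p < q)
    (μ : Ω → ℝ) (hμm : Measurable μ) (hμ : ∀ᵐ x ∂ν, 0 ≤ μ x)
    (u : Ω → ℝ) (hu : Measurable u) :
    (∫⁻ x, ENNReal.ofReal (μ x * |u x| ^ q) ∂ν) ^ (1 / q) ≤ normH ν μ p q u := by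
  have hq : (0:ℝ) < q := lt_trans (lt_trans one_pos hp) hpq
  refine le_sInf ?_
  rintro b ⟨τ, ⟨hτ, hρ⟩, rfl⟩
  -- key: ∫ μ |u/τ|^q ≤ ρ_H(u/τ) ≤ 1
  have h1 : (∫⁻ x, ENNReal.ofReal (μ x * |u x / τ| ^ q) ∂ν) ≤ 1 := by
    refine le_trans (lintegral_mono fun x => ?_) hρ
    exact ENNReal.ofReal_le_ofReal (le_add_of_nonneg_left (by positivity))
  -- rewrite the main integral
  have h2 : (∫⁻ x, ENNReal.ofReal (μ x * |u x| ^ q) ∂ν)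
      = (∫⁻ x, ENNReal.ofReal (μ x * |u x / τ| ^ q) ∂ν) * ENNReal.ofReal (τ ^ q) := by
    rw [← lintegral_mul_const']
    · refine lintegral_congr_ae ?_
      filter_upwards [hμ] with x hμx
      rw [← ENNReal.ofReal_mul (by positivity)]
      congr 1
      rw [abs_div, abs_of_pos hτ, Real.div_rpow (abs_nonneg _) hτ.le]
      field_simp
    · exact ENNReal.ofReal_ne_top
  have h3 : (∫⁻ x, ENNReal.ofReal (μ x * |u x| ^ q) ∂ν) ≤ ENNReal.ofReal (τ ^ q) := by
    rw [h2]
    calc _ ≤ 1 * ENNReal.ofReal (τ ^ q) := by gcongr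
    _ = _ := one_mul _
  calc (∫⁻ x, ENNReal.ofReal (μ x * |u x| ^ q) ∂ν) ^ (1 / q)
      ≤ (ENNReal.ofReal (τ ^ q)) ^ (1 / q) := by
        exact ENNReal.rpow_le_rpow h3 (by positivity)
    _ = ENNReal.ofReal τ := by
        rw [← ENNReal.ofReal_rpow_of_nonneg hτ.le hq.le, ← ENNReal.rpow_mul,
          mul_one_div, div_self hq.ne', ENNReal.rpow_one]
end

section
/- Let p, q be real numbers with 1 < p < q, let a > 0 and b ≥ 0 be reals, and let ψ : (0, +∞) → ℝ be differentiable such that t ↦ ψ′(t)/t^{q-1} is strictly increasing on (0, +∞). Define k(t) = (a/p)t^p + (b/q)t^q − ψ(t) for t > 0. If k′(1) = 0, then k(t) ≤ k(1) for all t > 0, with strict inequality k(t) < k(1) whenever t ≠ 1. -/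
/-!
Factor `k′(t) = t^{q-1} G(t)` with `G(t) = a t^{p-q} + b - ψ′(t)/t^{q-1}`. Since `p < q` and
`a ≥ 0`, the first term of `G` is antitone, and the last one is strictly antitone by hypothesis,
so `G` is strictly decreasing; `k′(1) = 0` says `G(1) = 0`. Hence `k′ > 0` on `(0, 1)` and
`k′ < 0` on `(1, ∞)`, so `t = 1` is the strict global maximum of `k`.
-/

open Set Real

lemma apply_lt_of_hasDerivAt_pos_of_neg {f f' : ℝ → ℝ} {l c t : ℝ}
    (hf : ∀ x, l < x → HasDerivAt f (f' x) x)
    (hpos : ∀ x, l < x → x < c → 0 < f' x) (hneg : ∀ x, c < x → f' x < 0)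
    (hlc : l < c) (hlt : l < t) (htc : t ≠ c) : f t < f c := by
  have hcont : ContinuousOn f (Ioi l) := fun x hx => (hf x hx).continuousAt.continuousWithinAt
  rcases htc.lt_or_gt with htc | hct
  · have hmono : StrictMonoOn f (Ioc l c) :=
      strictMonoOn_of_hasDerivWithinAt_pos (convex_Ioc l c) (hcont.mono Ioc_subset_Ioi_self)
        (fun x hx => by rw [interior_Ioc] at hx ⊢; exact (hf x hx.1).hasDerivWithinAt)
        (fun x hx => by rw [interior_Ioc] at hx; exact hpos x hx.1 hx.2)
    exact hmono ⟨hlt, htc.le⟩ ⟨hlc, le_rfl⟩ htc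
  · have hanti : StrictAntiOn f (Ici c) :=
      strictAntiOn_of_hasDerivWithinAt_neg (convex_Ici c)
        (hcont.mono fun x hx => hlc.trans_le hx)
        (fun x hx => by
          rw [interior_Ici] at hx ⊢; exact (hf x (hlc.trans hx)).hasDerivWithinAt)
        (fun x hx => by rw [interior_Ici] at hx; exact hneg x hx)
    exact hanti self_mem_Ici hct.le hct

lemma hasDerivAt_div_mul_rpow {p : ℝ} (hp : p ≠ 0) (c : ℝ) {t : ℝ} (ht : 0 < t) :
    HasDerivAt (fun x : ℝ => c / p * x ^ p) (c * t ^ (p - 1)) t :=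
  ((hasDerivAt_rpow_const (p := p) (Or.inl ht.ne')).const_mul (c / p)).congr_deriv
    (by field_simp)

lemma mul_rpow_add_mul_rpow_sub_eq {p q a b s t : ℝ} (ht : 0 < t) :
    a * t ^ (p - 1) + b * t ^ (q - 1) - s =
      t ^ (q - 1) * (a * t ^ (p - q) + b - s / t ^ (q - 1)) := by
  have hsplit : t ^ (p - 1) = t ^ (p - q) * t ^ (q - 1) := by
    rw [← rpow_add ht]; ring_nf
  have htq : t ^ (q - 1) ≠ 0 := (rpow_pos_of_pos ht _).ne'
  rw [hsplit]
  field_simp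

lemma strictAntiOn_mul_rpow_add_sub {p q a b : ℝ} (hpq : p ≤ q) (ha : 0 ≤ a) {g : ℝ → ℝ}
    (hg : StrictMonoOn g (Ioi 0)) : StrictAntiOn (fun t => a * t ^ (p - q) + b - g t) (Ioi 0) :=
  fun x hx y hy hxy => by
    have hpow : a * y ^ (p - q) ≤ a * x ^ (p - q) :=
      mul_le_mul_of_nonneg_left
        (antitoneOn_rpow_Ioi_of_exponent_nonpos (sub_nonpos.2 hpq) hx hy hxy.le) ha
    have hgxy := hg hx hy hxy
    dsimp only
    linarith

theorem fiber_max_at_one_general (p q : ℝ) (hp : 1 < p) (hpq : p < q)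
    (a b : ℝ) (ha : 0 < a) (ψ ψ' : ℝ → ℝ)
    (hψ : ∀ t : ℝ, 0 < t → HasDerivAt ψ (ψ' t) t)
    (hmono : StrictMonoOn (fun t => ψ' t / t ^ (q - 1)) (Set.Ioi (0 : ℝ)))
    (hcrit : HasDerivAt (fun t : ℝ => a / p * t ^ p + b / q * t ^ q - ψ t) 0 1) :
    ∀ t : ℝ, 0 < t →
      (a / p * t ^ p + b / q * t ^ q - ψ t ≤ a / p * 1 ^ p + b / q * 1 ^ q - ψ 1) ∧
      (t ≠ 1 → a / p * t ^ p + b / q * t ^ q - ψ t < a / p * 1 ^ p + b / q * 1 ^ q - ψ 1) := by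
  set k := fun t : ℝ => a / p * t ^ p + b / q * t ^ q - ψ t
  set G := fun t : ℝ => a * t ^ (p - q) + b - ψ' t / t ^ (q - 1)
  have hk : ∀ t, 0 < t → HasDerivAt k (t ^ (q - 1) * G t) t := fun t ht => by
    rw [← mul_rpow_add_mul_rpow_sub_eq ht]
    exact ((hasDerivAt_div_mul_rpow (by linarith) a ht).add
      (hasDerivAt_div_mul_rpow (by linarith) b ht)).sub (hψ t ht)
  have hG : StrictAntiOn G (Ioi 0) := strictAntiOn_mul_rpow_add_sub hpq.le ha.le hmono
  have hG1 : G 1 = 0 := by simpa using (hcrit.unique (hk 1 one_pos)).symm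
  have hmax : ∀ t, 0 < t → t ≠ 1 → k t < k 1 :=
    fun t ht hne => apply_lt_of_hasDerivAt_pos_of_neg hk
      (fun x hx hx1 => mul_pos (rpow_pos_of_pos hx _) (hG1 ▸ hG hx (mem_Ioi.2 one_pos) hx1))
      (fun x hx => mul_neg_of_pos_of_neg (rpow_pos_of_pos (one_pos.trans hx) _)
        (hG1 ▸ hG (mem_Ioi.2 one_pos) (mem_Ioi.2 (one_pos.trans hx)) hx))
      one_pos ht hne
  intro t ht
  exact ⟨(eq_or_ne t 1).elim (fun h => h ▸ le_rfl) (fun h => (hmax t ht h).le), hmax t ht⟩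

/-- Scalar lemma behind Proposition 5.2: for `1 < p < q`, `a > 0`, `b ≥ 0` and a
differentiable `ψ` with `ψ′(t)/t^{q-1}` strictly increasing on `(0,∞)`, if
`k(t) = (a/p)t^p + (b/q)t^q − ψ(t)` has `k′(1) = 0`, then `k(t) ≤ k(1)` for all
`t > 0`, with strict inequality for `t ≠ 1`. -/
theorem fiber_max_at_one (p q : ℝ) (hp : 1 < p) (hpq : p < q)
    (a b : ℝ) (ha : 0 < a) (hb : 0 ≤ b) (ψ ψ' : ℝ → ℝ)
    (hψ : ∀ t : ℝ, 0 < t → HasDerivAt ψ (ψ' t) t)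
    (hmono : StrictMonoOn (fun t => ψ' t / t ^ (q - 1)) (Set.Ioi (0 : ℝ)))
    (hcrit : HasDerivAt (fun t : ℝ => a / p * t ^ p + b / q * t ^ q - ψ t) 0 1) :
    ∀ t : ℝ, 0 < t →
      (a / p * t ^ p + b / q * t ^ q - ψ t ≤ a / p * 1 ^ p + b / q * 1 ^ q - ψ 1) ∧
      (t ≠ 1 → a / p * t ^ p + b / q * t ^ q - ψ t < a / p * 1 ^ p + b / q * 1 ^ q - ψ 1) :=
  fiber_max_at_one_general p q hp hpq a b ha ψ ψ' hψ hmono hcrit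
end

section
/- Let (Ω, ν) be a measure space with ν(Ω) < ∞, let 1 < p < q < r be real exponents, and let f : Ω × ℝ → ℝ be a Carathéodory function with |f(x,s)| ≤ c(1 + |s|^{r-1}) for ν-a.e. x and all s (for some c > 0), which is uniformly q-superlinear at ±∞, i.e. for every τ > 0 there exists K_τ > 0 with f(x,s)s ≥ τ|s|^q for ν-a.e. x and all |s| ≥ K_τ. Set F(x,s) = ∫_0^s f(x,t) dt. Let a ≥ 0, b ≥ 0 be reals and let u ∈ L^r(Ω, ν) satisfy ∫_Ω |u|^q dν > 0. Then (a/p)t^p + (b/q)t^q − ∫_Ω F(x, t·u(x)) dν(x) → −∞ as t → +∞. -/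
open MeasureTheory Filter intervalIntegral
open Set

/-!
Write `F(x, s) = ∫₀ˢ f(x, ·)`. The growth bound gives `|F(x, s)| ≤ c (|s| + |s|^r)`, so
`x ↦ F(x, t u(x))` is integrable for `u ∈ L^r`. Integrating `f(x, s) ≥ τ s^(q-1)` beyond the
superlinearity threshold `K_τ` gives `F(x, s) ≥ (τ/q) |s|^q - C` with `C` independent of `x`,
hence `∫ F(x, t u) ≥ (τ/q) t^q ∫ |u|^q - C ν(Ω)`. Choosing `τ` with
`(τ/q) ∫ |u|^q = a/p + b/q + 1`, the energy is at most `-t^q + C ν(Ω)` for `t ≥ 1`.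
-/

section Primitive

variable {g : ℝ → ℝ} {c r : ℝ}

lemma nonneg_of_abs_le_growth (hg : ∀ s, |g s| ≤ c * (1 + |s| ^ (r - 1))) : 0 ≤ c := by
  have hpos : 0 < 1 + |(0:ℝ)| ^ (r - 1) := by positivity
  exact (mul_nonneg_iff_of_pos_right hpos).mp ((abs_nonneg _).trans (hg 0))

lemma abs_integral_le_of_growth (hr : 1 ≤ r) (hg : ∀ s, |g s| ≤ c * (1 + |s| ^ (r - 1)))
    (s : ℝ) : |∫ t in (0:ℝ)..s, g t| ≤ c * (|s| + |s| ^ r) := by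
  have hc := nonneg_of_abs_le_growth hg
  have hpow : |s| ^ r = |s| ^ (r - 1) * |s| := by
    rw [← Real.rpow_add_one' (abs_nonneg s) (by linarith), sub_add_cancel]
  calc |∫ t in (0:ℝ)..s, g t| ≤ c * (1 + |s| ^ (r - 1)) * |s - 0| := by
        rw [← Real.norm_eq_abs]
        refine norm_integral_le_of_norm_le_const fun t ht => (hg t).trans ?_
        have hts : |t| ≤ |s| := by
          simpa using abs_sub_left_of_mem_uIcc (uIoc_subset_uIcc ht)
        gcongr
    _ = c * (|s| + |s| ^ r) := by
        rw [sub_zero, hpow]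
        ring

variable {q τ K M : ℝ}

lemma integral_ge_of_superlinear_of_nonneg (hg : Continuous g) (hq : 0 < q) (hτ : 0 ≤ τ)
    (hK : 0 < K) (hsup : ∀ s, K ≤ s → τ * s ^ q ≤ g s * s)
    (hM : ∀ s ∈ Icc 0 K, -M ≤ ∫ t in (0:ℝ)..s, g t) {s : ℝ} (hs : 0 ≤ s) :
    τ / q * s ^ q - (τ / q * K ^ q + M) ≤ ∫ t in (0:ℝ)..s, g t := by
  rcases le_total s K with hsK | hKs
  · have : τ / q * s ^ q ≤ τ / q * K ^ q := by gcongr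
    linarith [hM s ⟨hs, hsK⟩]
  have hderiv : ∀ t ∈ Icc K s, τ * t ^ (q - 1) ≤ g t := by
    intro t ht
    have ht0 : 0 < t := hK.trans_le ht.1
    rw [Real.rpow_sub_one ht0.ne', ← mul_div_assoc, div_le_iff₀ ht0]
    exact hsup t ht.1
  have hpow : ∫ t in K..s, τ * t ^ (q - 1) = τ / q * (s ^ q - K ^ q) := by
    rw [intervalIntegral.integral_const_mul, integral_rpow (Or.inl (by linarith)), sub_add_cancel]
    ring
  have htail : τ / q * (s ^ q - K ^ q) ≤ ∫ t in K..s, g t :=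
    hpow ▸ integral_mono_on hKs
      ((intervalIntegrable_rpow' (by linarith)).const_mul τ)
      (hg.intervalIntegrable _ _) hderiv
  rw [← integral_add_adjacent_intervals (hg.intervalIntegrable 0 K) (hg.intervalIntegrable K s)]
  linarith [hM K ⟨hK.le, le_rfl⟩]

lemma integral_neg_comp_neg (x : ℝ) :
    ∫ t in (0:ℝ)..x, -g (-t) = ∫ t in (0:ℝ)..-x, g t := by
  rw [intervalIntegral.integral_neg, intervalIntegral.integral_comp_neg, neg_zero,
    integral_symm, neg_neg]

lemma integral_ge_of_superlinear (hg : Continuous g) (hq : 0 < q) (hτ : 0 ≤ τ)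
    (hK : 0 < K) (hsup : ∀ s, K ≤ |s| → τ * |s| ^ q ≤ g s * s)
    (hM : ∀ s, |s| ≤ K → -M ≤ ∫ t in (0:ℝ)..s, g t) (s : ℝ) :
    τ / q * |s| ^ q - (τ / q * K ^ q + M) ≤ ∫ t in (0:ℝ)..s, g t := by
  rcases le_total 0 s with hs | hs
  · rw [abs_of_nonneg hs]
    refine integral_ge_of_superlinear_of_nonneg hg hq hτ hK (fun s hKs => ?_)
      (fun s hs => hM s (abs_le.2 ⟨by linarith [hs.1], hs.2⟩)) hs
    simpa [abs_of_nonneg (hK.le.trans hKs)] using hsup s (hKs.trans (le_abs_self s))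
  -- on the negative half-line, apply the previous lemma to the reflection `t ↦ -g (-t)`
  · rw [← neg_neg s, ← integral_neg_comp_neg, abs_neg, abs_of_nonneg (neg_nonneg.2 hs)]
    refine integral_ge_of_superlinear_of_nonneg (by fun_prop) hq hτ hK (fun s hKs => ?_)
      (fun s hs => ?_) (neg_nonneg.2 hs)
    · have := hsup (-s) (by rwa [abs_neg, abs_of_nonneg (hK.le.trans hKs)])
      rwa [abs_neg, abs_of_nonneg (hK.le.trans hKs), mul_neg, ← neg_mul] at this
    · rw [integral_neg_comp_neg]
      exact hM _ (by rw [abs_neg, abs_of_nonneg hs.1]; exact hs.2)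

lemma integral_ge_of_growth_of_superlinear (hg : Continuous g) (hr : 1 ≤ r) (hq : 0 < q)
    (hτ : 0 ≤ τ) (hK : 0 < K) (hgrowth : ∀ s, |g s| ≤ c * (1 + |s| ^ (r - 1)))
    (hsup : ∀ s, K ≤ |s| → τ * |s| ^ q ≤ g s * s) (s : ℝ) :
    τ / q * |s| ^ q - (τ / q * K ^ q + c * (K + K ^ r)) ≤ ∫ t in (0:ℝ)..s, g t := by
  refine integral_ge_of_superlinear hg hq hτ hK hsup (fun s hs => ?_) s
  have hc := nonneg_of_abs_le_growth hgrowth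
  have : c * (|s| + |s| ^ r) ≤ c * (K + K ^ r) := by gcongr
  linarith [neg_abs_le (∫ t in (0:ℝ)..s, g t), abs_integral_le_of_growth hr hgrowth s]

end Primitive

section Parametric

variable {Ω : Type*} [MeasurableSpace Ω] {f : Ω → ℝ → ℝ}

lemma stronglyMeasurable_integral_Ioc (hf : Measurable (Function.uncurry f))
    {a b : Ω → ℝ} (ha : Measurable a) (hb : Measurable b) :
    StronglyMeasurable fun x => ∫ s in Ioc (a x) (b x), f x s := by
  have hset : MeasurableSet {z : Ω × ℝ | z.2 ∈ Ioc (a z.1) (b z.1)} :=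
    (measurableSet_lt (ha.comp measurable_fst) measurable_snd).inter
      (measurableSet_le measurable_snd (hb.comp measurable_fst))
  simp_rw [← MeasureTheory.integral_indicator measurableSet_Ioc]
  exact StronglyMeasurable.integral_prod_right (hf.indicator hset).stronglyMeasurable

lemma stronglyMeasurable_intervalIntegral (hf : Measurable (Function.uncurry f))
    {a b : Ω → ℝ} (ha : Measurable a) (hb : Measurable b) :
    StronglyMeasurable fun x => ∫ s in a x..b x, f x s :=
  (stronglyMeasurable_integral_Ioc hf ha hb).sub (stronglyMeasurable_integral_Ioc hf hb ha)

lemma aestronglyMeasurable_intervalIntegral {ν : Measure Ω}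
    (hmeas : ∀ s, Measurable fun x => f x s) (hcont : ∀ᵐ x ∂ν, Continuous (f x))
    {a b : Ω → ℝ} (ha : Measurable a) (hb : Measurable b) :
    AEStronglyMeasurable (fun x => ∫ s in a x..b x, f x s) ν := by
  classical
  obtain ⟨S, hS, hSmeas, hSf⟩ := hcont.exists_measurable_mem
  -- a Carathéodory function everywhere, equal to `f` off a null set
  set f' : Ω → ℝ → ℝ := fun x s => if x ∈ S then f x s else 0
  have hf' : Measurable (Function.uncurry f') := by
    refine (measurable_uncurry_of_continuous_of_measurable (u := fun s x => f' x s)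
      (fun x => ?_) (fun s => Measurable.ite hSmeas (hmeas s) measurable_const)).comp
      measurable_swap
    by_cases hx : x ∈ S
    · simpa [f', hx] using hSf x hx
    · simpa [f', hx] using continuous_const
  refine (stronglyMeasurable_intervalIntegral hf' ha hb).aestronglyMeasurable.congr ?_
  filter_upwards [hS] with x hx
  simp [f', hx]

end Parametric

section Energy

variable {Ω : Type*} [MeasurableSpace Ω] {ν : Measure Ω} [IsFiniteMeasure ν] {f : Ω → ℝ → ℝ}
  {c q r τ K : ℝ} {v : Ω → ℝ}

lemma integrable_intervalIntegral_of_growth (hmeas : ∀ s, Measurable fun x => f x s)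
    (hcont : ∀ᵐ x ∂ν, Continuous (f x)) (hr : 1 ≤ r)
    (hgrowth : ∀ᵐ x ∂ν, ∀ s, |f x s| ≤ c * (1 + |s| ^ (r - 1)))
    (hv : Measurable v) (hvr : Integrable (fun x => |v x| ^ r) ν) :
    Integrable (fun x => ∫ s in (0:ℝ)..v x, f x s) ν := by
  have hv1 : Integrable (fun x => |v x|) ν := by
    simpa using integrable_norm_rpow_of_le hv.aestronglyMeasurable zero_le_one (by linarith) hr
      (by simpa using hvr)
  refine ((hv1.add hvr).const_mul c).mono'
    (aestronglyMeasurable_intervalIntegral hmeas hcont measurable_const hv) ?_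
  filter_upwards [hgrowth] with x hx
  exact abs_integral_le_of_growth hr hx (v x)

lemma integral_intervalIntegral_ge (hmeas : ∀ s, Measurable fun x => f x s)
    (hcont : ∀ᵐ x ∂ν, Continuous (f x)) (hr : 1 ≤ r) (hq : 0 < q) (hqr : q ≤ r)
    (hτ : 0 ≤ τ) (hK : 0 < K)
    (hgrowth : ∀ᵐ x ∂ν, ∀ s, |f x s| ≤ c * (1 + |s| ^ (r - 1)))
    (hsup : ∀ᵐ x ∂ν, ∀ s, K ≤ |s| → τ * |s| ^ q ≤ f x s * s)
    (hv : Measurable v) (hvr : Integrable (fun x => |v x| ^ r) ν) :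
    τ / q * ∫ x, |v x| ^ q ∂ν - (τ / q * K ^ q + c * (K + K ^ r)) * ν.real univ
      ≤ ∫ x, (∫ s in (0:ℝ)..v x, f x s) ∂ν := by
  have hvq : Integrable (fun x => |v x| ^ q) ν := by
    simpa using integrable_norm_rpow_of_le hv.aestronglyMeasurable hq.le (by linarith) hqr
      (by simpa using hvr)
  set C := τ / q * K ^ q + c * (K + K ^ r)
  calc τ / q * ∫ x, |v x| ^ q ∂ν - C * ν.real univ = ∫ x, (τ / q * |v x| ^ q - C) ∂ν := by
        rw [integral_sub (hvq.const_mul _) (integrable_const _),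
          MeasureTheory.integral_const_mul, MeasureTheory.integral_const, smul_eq_mul, mul_comm C]
    _ ≤ ∫ x, (∫ s in (0:ℝ)..v x, f x s) ∂ν := by
        refine integral_mono_ae ((hvq.const_mul _).sub (integrable_const _))
          (integrable_intervalIntegral_of_growth hmeas hcont hr hgrowth hv hvr) ?_
        filter_upwards [hcont, hgrowth, hsup] with x hxc hxg hxs
        exact integral_ge_of_growth_of_superlinear hxc hr hq hτ hK hxg hxs (v x)

end Energy

lemma tendsto_atBot_of_le_sub_rpow {G : ℝ → ℝ} {p q α β B : ℝ} (hpq : p ≤ q) (hq : 0 < q)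
    (hα : 0 ≤ α) (hG : ∀ᶠ t in atTop, (α + β + 1) * t ^ q - B ≤ G t) :
    Tendsto (fun t => α * t ^ p + β * t ^ q - G t) atTop atBot := by
  refine tendsto_atBot_mono' atTop ?_
    (tendsto_atBot_add_const_right _ B (tendsto_neg_atTop_atBot.comp (tendsto_rpow_atTop hq)))
  filter_upwards [hG, eventually_ge_atTop 1] with t hGt ht
  have : α * t ^ p ≤ α * t ^ q := by gcongr
  simp only [Function.comp_apply]
  linarith

theorem energy_tendsto_neg_infty_general {Ω : Type*} [MeasurableSpace Ω]
    (ν : MeasureTheory.Measure Ω) [MeasureTheory.IsFiniteMeasure ν]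
    (p q r : ℝ) (hp : 1 < p) (hpq : p < q) (hqr : q < r)
    (f : Ω → ℝ → ℝ)
    (hmeas : ∀ s : ℝ, Measurable fun x => f x s)
    (hcont : ∀ᵐ x ∂ν, Continuous fun s => f x s)
    (c : ℝ)
    (hgrowth : ∀ᵐ x ∂ν, ∀ s : ℝ, |f x s| ≤ c * (1 + |s| ^ (r - 1)))
    (hsuper : ∀ τ : ℝ, 0 < τ → ∃ K : ℝ, 0 < K ∧
      ∀ᵐ x ∂ν, ∀ s : ℝ, K ≤ |s| → τ * |s| ^ q ≤ f x s * s)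
    (a b : ℝ) (ha : 0 ≤ a) (hb : 0 ≤ b)
    (u : Ω → ℝ) (hu : Measurable u)
    (hur : (∫⁻ x, ENNReal.ofReal (|u x| ^ r) ∂ν) < ⊤)
    (huq : 0 < ∫⁻ x, ENNReal.ofReal (|u x| ^ q) ∂ν) :
    Tendsto (fun t : ℝ =>
        a / p * t ^ p + b / q * t ^ q - ∫ x, (∫ s in (0:ℝ)..(t * u x), f x s) ∂ν)
      atTop atBot := by
  have hq : 0 < q := by linarith
  have hur_int : Integrable (fun x => |u x| ^ r) ν :=
    ⟨(hu.abs.pow_const r).aestronglyMeasurable,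
      (hasFiniteIntegral_iff_ofReal (ae_of_all _ fun x => by positivity)).2 hur⟩
  have huq_int : Integrable (fun x => |u x| ^ q) ν := by
    simpa using integrable_norm_rpow_of_le hu.aestronglyMeasurable hq.le (by linarith) hqr.le
      (by simpa using hur_int)
  set I := ∫ x, |u x| ^ q ∂ν
  have hI : 0 < I := by
    rwa [← ENNReal.ofReal_pos,
      ofReal_integral_eq_lintegral_ofReal huq_int (ae_of_all _ fun x => by positivity)]
  set τ := q * (a / p + b / q + 1) / I
  have hτ : 0 < τ := by positivity
  have hτI : τ / q * I = a / p + b / q + 1 := by simp only [τ]; field_simp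
  obtain ⟨K, hK, hKsup⟩ := hsuper τ hτ
  refine tendsto_atBot_of_le_sub_rpow hpq.le hq (by positivity)
    (B := (τ / q * K ^ q + c * (K + K ^ r)) * ν.real univ) ?_
  filter_upwards [eventually_ge_atTop 0] with t ht
  have htu : Integrable (fun x => |t * u x| ^ r) ν := by
    simp_rw [abs_mul, Real.mul_rpow (abs_nonneg t) (abs_nonneg _), abs_of_nonneg ht]
    exact hur_int.const_mul _
  calc (a / p + b / q + 1) * t ^ q - (τ / q * K ^ q + c * (K + K ^ r)) * ν.real univ
      = τ / q * ∫ x, |t * u x| ^ q ∂ν - (τ / q * K ^ q + c * (K + K ^ r)) * ν.real univ := by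
        simp_rw [abs_mul, Real.mul_rpow (abs_nonneg t) (abs_nonneg _), abs_of_nonneg ht,
          MeasureTheory.integral_const_mul, ← hτI]
        ring
    _ ≤ _ := integral_intervalIntegral_ge hmeas hcont (by linarith) hq hqr.le hτ.le hK hgrowth
        hKsup (hu.const_mul t) htu

/-- Scalar core of Proposition 4.4: on a finite measure space, with `1 < p < q < r`,
a Carathéodory `f` with `(r-1)`-growth which is uniformly `q`-superlinear at `±∞`,
`a, b ≥ 0`, and `u ∈ L^r` with `∫ |u|^q dν > 0`, one has
`(a/p)t^p + (b/q)t^q − ∫ F(x, tu(x)) dν → −∞` as `t → +∞`. -/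
theorem energy_tendsto_neg_infty {Ω : Type*} [MeasurableSpace Ω]
    (ν : MeasureTheory.Measure Ω) [MeasureTheory.IsFiniteMeasure ν]
    (p q r : ℝ) (hp : 1 < p) (hpq : p < q) (hqr : q < r)
    (f : Ω → ℝ → ℝ)
    (hmeas : ∀ s : ℝ, Measurable fun x => f x s)
    (hcont : ∀ᵐ x ∂ν, Continuous fun s => f x s)
    (c : ℝ) (hc : 0 < c)
    (hgrowth : ∀ᵐ x ∂ν, ∀ s : ℝ, |f x s| ≤ c * (1 + |s| ^ (r - 1)))
    (hsuper : ∀ τ : ℝ, 0 < τ → ∃ K : ℝ, 0 < K ∧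
      ∀ᵐ x ∂ν, ∀ s : ℝ, K ≤ |s| → τ * |s| ^ q ≤ f x s * s)
    (a b : ℝ) (ha : 0 ≤ a) (hb : 0 ≤ b)
    (u : Ω → ℝ) (hu : Measurable u)
    (hur : (∫⁻ x, ENNReal.ofReal (|u x| ^ r) ∂ν) < ⊤)
    (huq : 0 < ∫⁻ x, ENNReal.ofReal (|u x| ^ q) ∂ν) :
    Tendsto (fun t : ℝ =>
        a / p * t ^ p + b / q * t ^ q - ∫ x, (∫ s in (0:ℝ)..(t * u x), f x s) ∂ν)
      atTop atBot :=
  energy_tendsto_neg_infty_general ν p q r hp hpq hqr f hmeas hcont c hgrowth hsuper a b ha hb u hu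
    hur huq
end
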